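/- Let I be a finite set of items, I_u ⊆ I nonempty with complement also nonempty, m = |I|, m⁺ = |I_u|, m⁻ = m − m⁺. Let K be a kernel function with |K(x,y)| ≤ 1 for all items x,y. Define q̃ᵢ = (1/m)·∑_{j∈I} K(xᵢ,xⱼ) and q_{ui} = (1/m⁻)·∑_{j∉I_u} K(xᵢ,xⱼ). Then |q̃ᵢ − q_{ui}| ≤ 2m⁺/m. -/
import Mathlib


open Finset

/-- Approximation error bound: replacing the per-user negative-item average of
kernel values by the global average incurs error at most `2 m⁺ / m`. -/
theorem qtilde_approx_bound {I : Type*} [Fintype I] [DecidableEq I]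
    (Iu : Finset I) (hIu : Iu.Nonempty) (hIuC : Iuᶜ.Nonempty)
    (K : I → I → ℝ) (hK : ∀ x y, |K x y| ≤ 1) (i : I) :
    |(1 / (Fintype.card I : ℝ)) * ∑ j, K i j
      - (1 / (Iuᶜ.card : ℝ)) * ∑ j ∈ Iuᶜ, K i j|
      ≤ 2 * (Iu.card : ℝ) / (Fintype.card I : ℝ) := by
  set m := (Fintype.card I : ℝ) with hm_def
  set p := (Iu.card : ℝ) with hp_def
  set n := (Iuᶜ.card : ℝ) with hn_def
  have hp : 0 < p := by rw [hp_def]; exact_mod_cast card_pos.mpr hIu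
  have hn : 0 < n := by rw [hn_def]; exact_mod_cast card_pos.mpr hIuC
  have hmpn : m = p + n := by
    have := Finset.card_add_card_compl Iu
    rw [hm_def, hp_def, hn_def]
    exact_mod_cast this.symm
  have hm : 0 < m := by rw [hmpn]; linarith
  set A := ∑ j ∈ Iu, K i j with hA_def
  set T := ∑ j ∈ Iuᶜ, K i j with hT_def
  have hS : ∑ j, K i j = A + T := (Finset.sum_add_sum_compl Iu _).symm
  have hA : |A| ≤ p := by
    calc |A| ≤ ∑ j ∈ Iu, |K i j| := Finset.abs_sum_le_sum_abs _ _
      _ ≤ Iu.card • (1 : ℝ) := Finset.sum_le_card_nsmul _ _ 1 (fun j _ => hK i j)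
      _ = p := by simp [hp_def]
  have hT : |T| ≤ n := by
    calc |T| ≤ ∑ j ∈ Iuᶜ, |K i j| := Finset.abs_sum_le_sum_abs _ _
      _ ≤ Iuᶜ.card • (1 : ℝ) := Finset.sum_le_card_nsmul _ _ 1 (fun j _ => hK i j)
      _ = n := by simp [hn_def]
  have key : (1 / m) * (A + T) - (1 / n) * T = A / m - T * p / (m * n) := by
    rw [hmpn]; field_simp; ring
  rw [hS, key]
  have h1 : |A / m| ≤ p / m := by
    rw [abs_div, abs_of_pos hm]
    gcongr
  have h2 : |T * p / (m * n)| ≤ p / m := by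
    rw [abs_div, abs_mul, abs_of_pos hp, abs_of_pos (mul_pos hm hn)]
    rw [div_le_div_iff₀ (mul_pos hm hn) hm]
    nlinarith [mul_le_mul_of_nonneg_right (mul_le_mul_of_nonneg_right hT hp.le) hm.le]
  calc |A / m - T * p / (m * n)| ≤ |A / m| + |T * p / (m * n)| := abs_sub _ _
    _ ≤ p / m + p / m := add_le_add h1 h2
    _ = 2 * p / m := by ring
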